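/- With H, M ∈ 𝒞_H(α,β), N ∈ 𝒞_H(γ,δ) as above, the vector space N with new action h ▷ n = γ⁻¹βγα⁻¹(h)·n and new coaction n ↦ n₍₀₎ ⊗ αβ⁻¹(n₍₁₎) is an (αγα⁻¹, αβ⁻¹δγ⁻¹βγα⁻¹)-Yetter–Drinfeld quasimodule over H. -/
import Mathlib


open TensorProduct

/-- The data of a Hopf quasigroup without its antipode: a unital (possibly nonassociative)
algebra together with a coassociative counital comultiplication which, together with the
counit, is an algebra homomorphism. Everything is expressed in terms of linear maps, so that
Sweedler-notation identities become equalities of composites of linear maps. -/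
structure HopfQuasigroupData (k H : Type*) [Field k] [AddCommGroup H] [Module k H] where
  mul : H ⊗[k] H →ₗ[k] H
  one : H
  comul : H →ₗ[k] H ⊗[k] H
  counit : H →ₗ[k] k
  one_mul : ∀ x : H, mul (one ⊗ₜ[k] x) = x
  mul_one : ∀ x : H, mul (x ⊗ₜ[k] one) = x
  coassoc : (TensorProduct.assoc k H H H).toLinearMap ∘ₗ comul.rTensor H ∘ₗ comul =
    comul.lTensor H ∘ₗ comul
  counit_comul : (TensorProduct.lid k H).toLinearMap ∘ₗ counit.rTensor H ∘ₗ comul =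
    LinearMap.id
  comul_counit : (TensorProduct.rid k H).toLinearMap ∘ₗ counit.lTensor H ∘ₗ comul =
    LinearMap.id
  comul_mul : comul ∘ₗ mul = TensorProduct.map mul mul ∘ₗ
    (TensorProduct.tensorTensorTensorComm k H H H H).toLinearMap ∘ₗ
      TensorProduct.map comul comul
  comul_one : comul one = one ⊗ₜ[k] one
  counit_mul : ∀ x y : H, counit (mul (x ⊗ₜ[k] y)) = counit x * counit y
  counit_one : counit one = 1

namespace HopfQuasigroupData

variable {k H : Type*} [Field k] [AddCommGroup H] [Module k H]

/-- The linear map `h ⊗ g ↦ ε(h)g`. -/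
noncomputable def εl (D : HopfQuasigroupData k H) : H ⊗[k] H →ₗ[k] H :=
  (TensorProduct.lid k H).toLinearMap ∘ₗ D.counit.rTensor H

/-- The linear map `g ⊗ h ↦ ε(h)g`. -/
noncomputable def εr (D : HopfQuasigroupData k H) : H ⊗[k] H →ₗ[k] H :=
  (TensorProduct.rid k H).toLinearMap ∘ₗ D.counit.lTensor H

/-- `S` is an antipode for the Hopf quasigroup data `D`. -/
def IsAntipode (D : HopfQuasigroupData k H) (S : H →ₗ[k] H) : Prop :=
  (D.mul ∘ₗ TensorProduct.map S D.mul ∘ₗ (TensorProduct.assoc k H H H).toLinearMap ∘ₗ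
      D.comul.rTensor H = D.εl) ∧
  (D.mul ∘ₗ TensorProduct.map LinearMap.id (D.mul ∘ₗ S.rTensor H) ∘ₗ
      (TensorProduct.assoc k H H H).toLinearMap ∘ₗ D.comul.rTensor H = D.εl) ∧
  (D.mul ∘ₗ TensorProduct.map (D.mul ∘ₗ S.lTensor H) LinearMap.id ∘ₗ
      (TensorProduct.assoc k H H H).symm.toLinearMap ∘ₗ D.comul.lTensor H = D.εr) ∧
  (D.mul ∘ₗ TensorProduct.map D.mul S ∘ₗ
      (TensorProduct.assoc k H H H).symm.toLinearMap ∘ₗ D.comul.lTensor H = D.εr)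

end HopfQuasigroupData

/-- An automorphism of a Hopf quasigroup `(D, S)`: a linear automorphism which is an algebra
and coalgebra morphism and commutes with the antipode. -/
structure HopfQuasigroupAut {k H : Type*} [Field k] [AddCommGroup H] [Module k H]
    (D : HopfQuasigroupData k H) (S : H →ₗ[k] H) where
  toLinearEquiv : H ≃ₗ[k] H
  map_mul : toLinearEquiv.toLinearMap ∘ₗ D.mul =
    D.mul ∘ₗ TensorProduct.map toLinearEquiv.toLinearMap toLinearEquiv.toLinearMap
  map_one : toLinearEquiv D.one = D.one
  map_comul : D.comul ∘ₗ toLinearEquiv.toLinearMap =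
    TensorProduct.map toLinearEquiv.toLinearMap toLinearEquiv.toLinearMap ∘ₗ D.comul
  map_counit : D.counit ∘ₗ toLinearEquiv.toLinearMap = D.counit
  comm_antipode : toLinearEquiv.toLinearMap ∘ₗ S = S ∘ₗ toLinearEquiv.toLinearMap

namespace HopfQuasigroupAut

variable {k H : Type*} [Field k] [AddCommGroup H] [Module k H]
  {D : HopfQuasigroupData k H} {S : H →ₗ[k] H}

/-- The underlying linear map of a Hopf quasigroup automorphism. -/
def lmap (α : HopfQuasigroupAut D S) : H →ₗ[k] H := α.toLinearEquiv.toLinearMap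

/-- The underlying linear map of the inverse of a Hopf quasigroup automorphism. -/
def invmap (α : HopfQuasigroupAut D S) : H →ₗ[k] H := α.toLinearEquiv.symm.toLinearMap

end HopfQuasigroupAut

section Quasimodules

variable {k H M : Type*} [Field k] [AddCommGroup H] [Module k H]
  [AddCommGroup M] [Module k M]

/-- The linear map `h ⊗ m ↦ ε(h)m`. -/
noncomputable def εAct (D : HopfQuasigroupData k H) (M : Type*) [AddCommGroup M]
    [Module k M] : H ⊗[k] M →ₗ[k] M :=
  (TensorProduct.lid k M).toLinearMap ∘ₗ D.counit.rTensor M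

/-- `act` makes `M` a left quasimodule over the Hopf quasigroup `(D, S)`:
`1·m = m` and `Σ h₁·(S(h₂)·m) = Σ S(h₁)·(h₂·m) = ε(h)m`. -/
def IsQuasimodule (D : HopfQuasigroupData k H) (S : H →ₗ[k] H)
    (act : H ⊗[k] M →ₗ[k] M) : Prop :=
  (∀ m : M, act (D.one ⊗ₜ[k] m) = m) ∧
  (act ∘ₗ (act ∘ₗ S.rTensor M).lTensor H ∘ₗ (TensorProduct.assoc k H H M).toLinearMap ∘ₗ
      D.comul.rTensor M = εAct D M) ∧
  (act ∘ₗ S.rTensor M ∘ₗ act.lTensor H ∘ₗ (TensorProduct.assoc k H H M).toLinearMap ∘ₗ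
      D.comul.rTensor M = εAct D M)

/-- `coact` makes `M` a (counital, coassociative) right comodule over `D`. -/
def IsComodule (D : HopfQuasigroupData k H) (coact : M →ₗ[k] M ⊗[k] H) : Prop :=
  ((TensorProduct.rid k M).toLinearMap ∘ₗ D.counit.lTensor M ∘ₗ coact = LinearMap.id) ∧
  (coact.rTensor H ∘ₗ coact =
    (TensorProduct.assoc k M H H).symm.toLinearMap ∘ₗ D.comul.lTensor M ∘ₗ coact)

/-- The shuffle `(h₁ ⊗ (h₂₁ ⊗ h₂₂)) ⊗ (m₀ ⊗ m₁) ↦ (h₂₁ ⊗ m₀) ⊗ ((h₂₂ ⊗ m₁) ⊗ h₁)`. -/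
noncomputable def ydShuffle (k H M : Type*) [Field k] [AddCommGroup H] [Module k H]
    [AddCommGroup M] [Module k M] :
    (H ⊗[k] (H ⊗[k] H)) ⊗[k] (M ⊗[k] H) →ₗ[k] (H ⊗[k] M) ⊗[k] ((H ⊗[k] H) ⊗[k] H) :=
  (TensorProduct.assoc k (H ⊗[k] M) (H ⊗[k] H) H).toLinearMap ∘ₗ
    (TensorProduct.comm k H ((H ⊗[k] M) ⊗[k] (H ⊗[k] H))).toLinearMap ∘ₗ
      ((TensorProduct.tensorTensorTensorComm k H H M H).toLinearMap.lTensor H) ∘ₗ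
        (TensorProduct.assoc k H (H ⊗[k] H) (M ⊗[k] H)).toLinearMap

/-- The `(α,β)`-Yetter–Drinfeld quasimodule compatibility condition (Eq. (5.1)):
`ρ(h·m) = Σ h₂₁·m₀ ⊗ (β(h₂₂)m₁)α(S⁻¹(h₁))`. -/
noncomputable def YDCompat (D : HopfQuasigroupData k H) (Sinv : H →ₗ[k] H)
    (α β : H →ₗ[k] H) (act : H ⊗[k] M →ₗ[k] M) (coact : M →ₗ[k] M ⊗[k] H) : Prop :=
  coact ∘ₗ act =
    TensorProduct.map act
        (D.mul ∘ₗ TensorProduct.map (D.mul ∘ₗ β.rTensor H) (α ∘ₗ Sinv)) ∘ₗ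
      ydShuffle k H M ∘ₗ coact.lTensor (H ⊗[k] (H ⊗[k] H)) ∘ₗ
        (D.comul.lTensor H).rTensor M ∘ₗ D.comul.rTensor M

end Quasimodules

section Statement14

variable {k H N : Type*} [Field k] [AddCommGroup H] [Module k H]
  [AddCommGroup N] [Module k N]

section AuxYD

variable {k H : Type*} [Field k] [AddCommGroup H] [Module k H]

lemma TensorProduct.map_map' {k A B C A' B' C' : Type*} [Field k]
    [AddCommGroup A] [Module k A] [AddCommGroup B] [Module k B]
    [AddCommGroup C] [Module k C] [AddCommGroup A'] [Module k A']
    [AddCommGroup B'] [Module k B'] [AddCommGroup C'] [Module k C']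
    (f₂ : B →ₗ[k] C) (g₂ : B' →ₗ[k] C') (f₁ : A →ₗ[k] B) (g₁ : A' →ₗ[k] B')
    (x : A ⊗[k] A') :
    TensorProduct.map f₂ g₂ (TensorProduct.map f₁ g₁ x) =
      TensorProduct.map (f₂ ∘ₗ f₁) (g₂ ∘ₗ g₁) x := by
  rw [TensorProduct.map_comp]; rfl

/-- Pointwise bialgebra-morphism-style properties of an endomorphism of `H`. -/
structure AuxHom (D : HopfQuasigroupData k H) (S Sinv : H →ₗ[k] H)
    (f : H →ₗ[k] H) : Prop where
  one : f D.one = D.one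
  comul : ∀ x, D.comul (f x) = TensorProduct.map f f (D.comul x)
  counit : ∀ x, D.counit (f x) = D.counit x
  mul' : ∀ x, f (D.mul x) = D.mul (TensorProduct.map f f x)
  s : ∀ x, f (S x) = S (f x)
  sinv : ∀ x, f (Sinv x) = Sinv (f x)

namespace AuxHom

variable {D : HopfQuasigroupData k H} {S Sinv : H →ₗ[k] H} {f g : H →ₗ[k] H}

lemma comp (hf : AuxHom D S Sinv f) (hg : AuxHom D S Sinv g) :
    AuxHom D S Sinv (f ∘ₗ g) where
  one := by simp [hg.one, hf.one]
  comul := fun x => by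
    simp only [LinearMap.comp_apply, hg.comul, hf.comul, TensorProduct.map_comp]
  counit := fun x => by simp [hg.counit, hf.counit]
  mul' := fun x => by
    simp only [LinearMap.comp_apply, hg.mul', hf.mul', TensorProduct.map_comp]
  s := fun x => by simp [hg.s, hf.s]
  sinv := fun x => by simp [hg.sinv, hf.sinv]

lemma comul_comp (hf : AuxHom D S Sinv f) :
    D.comul ∘ₗ f = TensorProduct.map f f ∘ₗ D.comul := LinearMap.ext hf.comul

lemma counit_comp (hf : AuxHom D S Sinv f) : D.counit ∘ₗ f = D.counit :=
  LinearMap.ext hf.counit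

lemma s_comp (hf : AuxHom D S Sinv f) : f ∘ₗ S = S ∘ₗ f := LinearMap.ext hf.s

end AuxHom

lemma aux_lmap {D : HopfQuasigroupData k H} {S : H →ₗ[k] H} (Sinv : H →ₗ[k] H)
    (hSinv₁ : S ∘ₗ Sinv = LinearMap.id) (hSinv₂ : Sinv ∘ₗ S = LinearMap.id)
    (α : HopfQuasigroupAut D S) : AuxHom D S Sinv α.lmap where
  one := α.map_one
  comul := fun x => LinearMap.congr_fun α.map_comul x
  counit := fun x => LinearMap.congr_fun α.map_counit x
  mul' := fun x => LinearMap.congr_fun α.map_mul x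
  s := fun x => LinearMap.congr_fun α.comm_antipode x
  sinv := fun x => by
    have hSi : Function.Injective S := fun a b hab => by
      have ha := LinearMap.congr_fun hSinv₂ a
      have hb := LinearMap.congr_fun hSinv₂ b
      simp only [LinearMap.comp_apply, LinearMap.id_apply] at ha hb
      rw [← ha, ← hb, hab]
    apply hSi
    have hs : α.lmap (S (Sinv x)) = S (α.lmap (Sinv x)) :=
      LinearMap.congr_fun α.comm_antipode (Sinv x)
    have h1 : S (Sinv x) = x := LinearMap.congr_fun hSinv₁ x
    have h2 : S (Sinv (α.lmap x)) = α.lmap x := LinearMap.congr_fun hSinv₁ (α.lmap x)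
    rw [h2, ← hs, h1]

lemma aux_invmap {D : HopfQuasigroupData k H} {S : H →ₗ[k] H} (Sinv : H →ₗ[k] H)
    (hSinv₁ : S ∘ₗ Sinv = LinearMap.id) (hSinv₂ : Sinv ∘ₗ S = LinearMap.id)
    (α : HopfQuasigroupAut D S) : AuxHom D S Sinv α.invmap := by
  have hl := aux_lmap Sinv hSinv₁ hSinv₂ α
  have hinj : Function.Injective α.lmap := α.toLinearEquiv.injective
  have hcancel : ∀ x, α.lmap (α.invmap x) = x := fun x =>
    α.toLinearEquiv.apply_symm_apply x
  have hcancel' : ∀ x, α.invmap (α.lmap x) = x := fun x =>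
    α.toLinearEquiv.symm_apply_apply x
  have hcomp : α.invmap ∘ₗ α.lmap = LinearMap.id := LinearMap.ext hcancel'
  refine ⟨?_, ?_, ?_, ?_, ?_, ?_⟩
  · apply hinj; rw [hcancel, hl.one]
  · intro x
    have h := hl.comul (α.invmap x)
    rw [hcancel] at h
    rw [h, TensorProduct.map_map', hcomp, TensorProduct.map_id, LinearMap.id_apply]
  · intro x; conv_rhs => rw [← hcancel x]
    rw [hl.counit]
  · intro x
    apply hinj
    rw [hcancel, hl.mul', TensorProduct.map_map',
      show α.lmap ∘ₗ α.invmap = LinearMap.id from LinearMap.ext hcancel,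
      TensorProduct.map_id, LinearMap.id_apply]
  · intro x; apply hinj
    rw [hcancel, hl.s, hcancel]
  · intro x; apply hinj
    rw [hcancel, hl.sinv, hcancel]

end AuxYD

section GeneralYD

variable {k H N : Type*} [Field k] [AddCommGroup H] [Module k H]
  [AddCommGroup N] [Module k N]
variable {D : HopfQuasigroupData k H} {S Sinv : H →ₗ[k] H} {f g : H →ₗ[k] H}

lemma AuxHom.comul_rT (hf : AuxHom D S Sinv f) (z : H ⊗[k] N) :
    D.comul.rTensor N (f.rTensor N z) =
      (TensorProduct.map f f).rTensor N (D.comul.rTensor N z) := by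
  rw [← LinearMap.comp_apply, ← LinearMap.rTensor_comp, hf.comul_comp,
    LinearMap.rTensor_comp, LinearMap.comp_apply]

lemma rT_swap {f g : H →ₗ[k] H} (h : f ∘ₗ g = g ∘ₗ f) (z : H ⊗[k] N) :
    f.rTensor N (g.rTensor N z) = g.rTensor N (f.rTensor N z) := by
  rw [← LinearMap.comp_apply, ← LinearMap.rTensor_comp, h,
    LinearMap.rTensor_comp, LinearMap.comp_apply]

lemma AuxHom.εAct_rT (hf : AuxHom D S Sinv f) (z : H ⊗[k] N) :
    εAct D N (f.rTensor N z) = εAct D N z := by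
  simp only [εAct, LinearMap.comp_apply]
  rw [← LinearMap.comp_apply (D.counit.rTensor N), ← LinearMap.rTensor_comp,
    hf.counit_comp]

lemma assoc_rT (f : H →ₗ[k] H) (x : (H ⊗[k] H) ⊗[k] N) :
    (TensorProduct.assoc k H H N) ((TensorProduct.map f f).rTensor N x) =
      TensorProduct.map f (f.rTensor N) ((TensorProduct.assoc k H H N) x) :=
  (TensorProduct.map_map_assoc f f LinearMap.id x).symm

lemma eA (hf : AuxHom D S Sinv f) (act : H ⊗[k] N →ₗ[k] N)
    (u : H ⊗[k] (H ⊗[k] N)) :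
    f.rTensor N ((((act ∘ₗ f.rTensor N) ∘ₗ S.rTensor N)).lTensor H u) =
      ((act ∘ₗ S.rTensor N).lTensor H) (TensorProduct.map f (f.rTensor N) u) := by
  rw [← LinearMap.comp_apply, ← LinearMap.comp_apply (_ : H ⊗[k] (H ⊗[k] N) →ₗ[k] H ⊗[k] N)]
  refine LinearMap.congr_fun ?_ u
  apply TensorProduct.ext'
  intro h y
  simp only [LinearMap.comp_apply, TensorProduct.map_tmul, LinearMap.lTensor_tmul,
    LinearMap.rTensor_tmul]
  rw [rT_swap hf.s_comp y]

lemma eB (hf : AuxHom D S Sinv f) (act : H ⊗[k] N →ₗ[k] N)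
    (u : H ⊗[k] (H ⊗[k] N)) :
    f.rTensor N ((act ∘ₗ f.rTensor N).lTensor H u) =
      act.lTensor H (TensorProduct.map f (f.rTensor N) u) := by
  rw [← LinearMap.comp_apply, ← LinearMap.comp_apply (_ : H ⊗[k] (H ⊗[k] N) →ₗ[k] H ⊗[k] N)]
  refine LinearMap.congr_fun ?_ u
  apply TensorProduct.ext'
  intro h y
  simp only [LinearMap.comp_apply, TensorProduct.map_tmul, LinearMap.lTensor_tmul,
    LinearMap.rTensor_tmul]

lemma part1YD (hf : AuxHom D S Sinv f) (act : H ⊗[k] N →ₗ[k] N)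
    (hq : IsQuasimodule D S act) : IsQuasimodule D S (act ∘ₗ f.rTensor N) := by
  obtain ⟨q1, q2, q3⟩ := hq
  refine ⟨?_, ?_, ?_⟩
  · intro m
    simp only [LinearMap.comp_apply, LinearMap.rTensor_tmul, hf.one]
    exact q1 m
  · apply LinearMap.ext; intro z
    simp only [LinearMap.comp_apply]
    have h2 := LinearMap.congr_fun q2 (f.rTensor N z)
    simp only [LinearMap.comp_apply, LinearEquiv.coe_coe] at h2 ⊢
    rw [eA hf act, ← assoc_rT, ← hf.comul_rT, h2, hf.εAct_rT]
  · apply LinearMap.ext; intro z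
    simp only [LinearMap.comp_apply]
    have h3 := LinearMap.congr_fun q3 (f.rTensor N z)
    simp only [LinearMap.comp_apply, LinearEquiv.coe_coe] at h3 ⊢
    rw [rT_swap hf.s_comp, eB hf act, ← assoc_rT, ← hf.comul_rT, h3, hf.εAct_rT]

lemma part2coreYD (hg : AuxHom D S Sinv g) (u : N ⊗[k] H) :
    ((g.lTensor N).rTensor H) (g.lTensor (N ⊗[k] H)
        ((TensorProduct.assoc k N H H).symm (D.comul.lTensor N u))) =
      (TensorProduct.assoc k N H H).symm (D.comul.lTensor N (g.lTensor N u)) := by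
  induction u using TensorProduct.induction_on with
  | zero => simp
  | add a b ha hb => simp only [map_add, ha, hb]
  | tmul n h =>
    simp only [LinearMap.lTensor_tmul]
    rw [hg.comul]
    have h1 : ∀ w : (N ⊗[k] H) ⊗[k] H,
        (g.lTensor N).rTensor H (g.lTensor (N ⊗[k] H) w) =
          TensorProduct.map (g.lTensor N) g w := fun w => by
      rw [← LinearMap.comp_apply, LinearMap.rTensor_comp_lTensor]
    rw [h1]
    have h2 := TensorProduct.map_map_assoc_symm (LinearMap.id (M := N)) g g
      (n ⊗ₜ[k] D.comul h)
    refine Eq.trans h2 (by congr 1)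

lemma part2YD (hg : AuxHom D S Sinv g) (coact : N →ₗ[k] N ⊗[k] H)
    (hc : IsComodule D coact) : IsComodule D (g.lTensor N ∘ₗ coact) := by
  obtain ⟨c1, c2⟩ := hc
  constructor
  · apply LinearMap.ext; intro n
    simp only [LinearMap.comp_apply, LinearMap.id_apply]
    have hcu : D.counit.lTensor N (g.lTensor N (coact n)) =
        D.counit.lTensor N (coact n) := by
      rw [← LinearMap.comp_apply, ← LinearMap.lTensor_comp, hg.counit_comp]
    rw [hcu]
    have := LinearMap.congr_fun c1 n
    simpa only [LinearMap.comp_apply, LinearMap.id_apply] using this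
  · apply LinearMap.ext; intro n
    simp only [LinearMap.comp_apply, LinearEquiv.coe_coe]
    rw [LinearMap.rTensor_comp, LinearMap.comp_apply]
    have sw : coact.rTensor H (g.lTensor N (coact n)) =
        g.lTensor (N ⊗[k] H) (coact.rTensor H (coact n)) := by
      rw [← LinearMap.comp_apply, LinearMap.rTensor_comp_lTensor,
        ← LinearMap.lTensor_comp_rTensor, LinearMap.comp_apply]
    rw [sw]
    have hc2 := LinearMap.congr_fun c2 n
    simp only [LinearMap.comp_apply, LinearEquiv.coe_coe] at hc2
    rw [hc2, part2coreYD hg (coact n)]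

lemma s1YD (hf : AuxHom D S Sinv f) :
    D.comul.lTensor H ∘ₗ TensorProduct.map f f =
      TensorProduct.map f (TensorProduct.map f f) ∘ₗ D.comul.lTensor H := by
  apply TensorProduct.ext'
  intro a b
  simp only [LinearMap.comp_apply, TensorProduct.map_tmul, LinearMap.lTensor_tmul,
    hf.comul]

lemma t2YD (hf : AuxHom D S Sinv f) (u : (H ⊗[k] H) ⊗[k] N) :
    (D.comul.lTensor H).rTensor N ((TensorProduct.map f f).rTensor N u) =
      (TensorProduct.map f (TensorProduct.map f f)).rTensor N
        ((D.comul.lTensor H).rTensor N u) := by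
  rw [← LinearMap.comp_apply, ← LinearMap.rTensor_comp, s1YD hf,
    LinearMap.rTensor_comp, LinearMap.comp_apply]

lemma t3YD (coact : N →ₗ[k] N ⊗[k] H)
    (F : H ⊗[k] (H ⊗[k] H) →ₗ[k] H ⊗[k] (H ⊗[k] H))
    (v : (H ⊗[k] (H ⊗[k] H)) ⊗[k] N) :
    coact.lTensor (H ⊗[k] (H ⊗[k] H)) (F.rTensor N v) =
      F.rTensor (N ⊗[k] H) (coact.lTensor (H ⊗[k] (H ⊗[k] H)) v) := by
  rw [← LinearMap.comp_apply, LinearMap.lTensor_comp_rTensor,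
    ← LinearMap.rTensor_comp_lTensor, LinearMap.comp_apply]

lemma t4YD (f : H →ₗ[k] H) (w : (H ⊗[k] (H ⊗[k] H)) ⊗[k] (N ⊗[k] H)) :
    ydShuffle k H N
        ((TensorProduct.map f (TensorProduct.map f f)).rTensor (N ⊗[k] H) w) =
      TensorProduct.map (f.rTensor N) (TensorProduct.map (f.rTensor H) f)
        (ydShuffle k H N w) := by
  induction w using TensorProduct.induction_on with
  | zero => simp
  | add a b ha hb => simp only [map_add, ha, hb]
  | tmul x y =>
    induction x using TensorProduct.induction_on with
    | zero => simp [TensorProduct.zero_tmul]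
    | add u v hu hv => simp only [TensorProduct.add_tmul, map_add, hu, hv]
    | tmul h ab =>
      induction ab using TensorProduct.induction_on with
      | zero => simp [TensorProduct.tmul_zero, TensorProduct.zero_tmul]
      | add u v hu hv =>
        simp only [TensorProduct.tmul_add, TensorProduct.add_tmul, map_add, hu, hv]
      | tmul a b =>
        induction y using TensorProduct.induction_on with
        | zero => simp [TensorProduct.tmul_zero]
        | add u v hu hv => simp only [TensorProduct.tmul_add, map_add, hu, hv]
        | tmul n m =>
          simp [ydShuffle, TensorProduct.tensorTensorTensorComm_tmul]

lemma t5YD (g : H →ₗ[k] H) (w : (H ⊗[k] (H ⊗[k] H)) ⊗[k] (N ⊗[k] H)) :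
    ydShuffle k H N ((g.lTensor N).lTensor (H ⊗[k] (H ⊗[k] H)) w) =
      ((g.lTensor H).rTensor H).lTensor (H ⊗[k] N) (ydShuffle k H N w) := by
  induction w using TensorProduct.induction_on with
  | zero => simp
  | add a b ha hb => simp only [map_add, ha, hb]
  | tmul x y =>
    induction x using TensorProduct.induction_on with
    | zero => simp [TensorProduct.zero_tmul]
    | add u v hu hv => simp only [TensorProduct.add_tmul, map_add, hu, hv]
    | tmul h ab =>
      induction ab using TensorProduct.induction_on with
      | zero => simp [TensorProduct.tmul_zero, TensorProduct.zero_tmul]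
      | add u v hu hv =>
        simp only [TensorProduct.tmul_add, TensorProduct.add_tmul, map_add, hu, hv]
      | tmul a b =>
        induction y using TensorProduct.induction_on with
        | zero => simp [TensorProduct.tmul_zero]
        | add u v hu hv => simp only [TensorProduct.tmul_add, map_add, hu, hv]
        | tmul n m =>
          simp [ydShuffle, TensorProduct.tensorTensorTensorComm_tmul]

lemma lT_mapYD {P Q : Type*} [AddCommGroup P] [Module k P] [AddCommGroup Q]
    [Module k Q] (F : P →ₗ[k] N) (G : Q →ₗ[k] H) (t : P ⊗[k] Q) :
    g.lTensor N (TensorProduct.map F G t) = TensorProduct.map F (g ∘ₗ G) t := by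
  have h := TensorProduct.map_map' LinearMap.id g F G t
  rw [LinearMap.id_comp] at h
  exact h

lemma map_splitYD {A B X Y Z : Type*} [AddCommGroup A] [Module k A]
    [AddCommGroup B] [Module k B] [AddCommGroup X] [Module k X]
    [AddCommGroup Y] [Module k Y] [AddCommGroup Z] [Module k Z]
    (F : A →ₗ[k] B) (L : Y →ₗ[k] Z) (W : X →ₗ[k] Y) (t : A ⊗[k] X) :
    TensorProduct.map F (L ∘ₗ W) t = TensorProduct.map F L (W.lTensor A t) := by
  have h := TensorProduct.map_map' F L LinearMap.id W t
  rw [LinearMap.comp_id] at h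
  exact h.symm

lemma coreYD {γl δl α' β' : H →ₗ[k] H} (hf : AuxHom D S Sinv f)
    (hg : AuxHom D S Sinv g)
    (hβ' : ∀ x, g (δl (f x)) = β' x) (hα' : ∀ x, g (γl (f x)) = α' x) :
    g ∘ₗ ((D.mul ∘ₗ TensorProduct.map (D.mul ∘ₗ δl.rTensor H) (γl ∘ₗ Sinv)) ∘ₗ
        TensorProduct.map (f.rTensor H) f) =
      (D.mul ∘ₗ TensorProduct.map (D.mul ∘ₗ β'.rTensor H) (α' ∘ₗ Sinv)) ∘ₗ
        (g.lTensor H).rTensor H := by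
  apply LinearMap.ext
  intro t
  induction t using TensorProduct.induction_on with
  | zero => simp
  | add a b ha hb => simp only [map_add, ha, hb]
  | tmul x c =>
    induction x using TensorProduct.induction_on with
    | zero => simp [TensorProduct.zero_tmul]
    | add u v hu hv => simp only [TensorProduct.add_tmul, map_add, hu, hv]
    | tmul a b =>
      simp only [LinearMap.comp_apply, TensorProduct.map_tmul,
        LinearMap.rTensor_tmul, LinearMap.lTensor_tmul]
      rw [hg.mul']
      simp only [TensorProduct.map_tmul]
      rw [hg.mul']
      simp only [TensorProduct.map_tmul]
      rw [hβ' a, ← hf.sinv c, hα' (Sinv c)]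

lemma part3YD {γl δl α' β' : H →ₗ[k] H} (hf : AuxHom D S Sinv f)
    (hg : AuxHom D S Sinv g)
    (act : H ⊗[k] N →ₗ[k] N) (coact : N →ₗ[k] N ⊗[k] H)
    (hyd : YDCompat D Sinv γl δl act coact)
    (hβ' : ∀ x, g (δl (f x)) = β' x) (hα' : ∀ x, g (γl (f x)) = α' x) :
    YDCompat D Sinv α' β' (act ∘ₗ f.rTensor N) (g.lTensor N ∘ₗ coact) := by
  unfold YDCompat at hyd ⊢
  apply LinearMap.ext; intro z
  simp only [LinearMap.comp_apply]
  have hy := LinearMap.congr_fun hyd (f.rTensor N z)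
  simp only [LinearMap.comp_apply] at hy
  rw [hy, hf.comul_rT, t2YD hf, t3YD, t4YD]
  rw [TensorProduct.map_map']
  rw [lT_mapYD]
  rw [coreYD hf hg hβ' hα']
  rw [map_splitYD]
  rw [← t5YD]
  have lcomp : ∀ v : (H ⊗[k] (H ⊗[k] H)) ⊗[k] N,
      (g.lTensor N).lTensor (H ⊗[k] (H ⊗[k] H))
          (coact.lTensor (H ⊗[k] (H ⊗[k] H)) v) =
        (g.lTensor N ∘ₗ coact).lTensor (H ⊗[k] (H ⊗[k] H)) v := fun v => by
    rw [LinearMap.lTensor_comp, LinearMap.comp_apply]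
  rw [lcomp]

end GeneralYD

/-- Proposition 6.1(2): If `M ∈ 𝒞_H(α,β)` and `N ∈ 𝒞_H(γ,δ)`, then `N`
with the new action `h ▷ n = γ⁻¹βγα⁻¹(h)·n` and new coaction `n ↦ n₀ ⊗ αβ⁻¹(n₁)` is an
`(αγα⁻¹, αβ⁻¹δγ⁻¹βγα⁻¹)`-Yetter–Drinfeld quasimodule over `H`. -/
theorem conjugate_YD_quasimodule (D : HopfQuasigroupData k H) (S : H →ₗ[k] H)
    (hS : D.IsAntipode S) (Sinv : H →ₗ[k] H) (hSinv₁ : S ∘ₗ Sinv = LinearMap.id)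
    (hSinv₂ : Sinv ∘ₗ S = LinearMap.id)
    (α β γ δ : HopfQuasigroupAut D S)
    (actN : H ⊗[k] N →ₗ[k] N) (coactN : N →ₗ[k] N ⊗[k] H)
    (hNq : IsQuasimodule D S actN) (hNc : IsComodule D coactN)
    (hNyd : YDCompat D Sinv γ.lmap δ.lmap actN coactN) :
    IsQuasimodule D S
        (actN ∘ₗ (γ.invmap ∘ₗ β.lmap ∘ₗ γ.lmap ∘ₗ α.invmap).rTensor N) ∧
      IsComodule D ((α.lmap ∘ₗ β.invmap).lTensor N ∘ₗ coactN) ∧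
      YDCompat D Sinv (α.lmap ∘ₗ γ.lmap ∘ₗ α.invmap)
        (α.lmap ∘ₗ β.invmap ∘ₗ δ.lmap ∘ₗ γ.invmap ∘ₗ β.lmap ∘ₗ γ.lmap ∘ₗ α.invmap)
        (actN ∘ₗ (γ.invmap ∘ₗ β.lmap ∘ₗ γ.lmap ∘ₗ α.invmap).rTensor N)
        ((α.lmap ∘ₗ β.invmap).lTensor N ∘ₗ coactN) := by
  have hφ : AuxHom D S Sinv (γ.invmap ∘ₗ β.lmap ∘ₗ γ.lmap ∘ₗ α.invmap) :=
    (aux_invmap Sinv hSinv₁ hSinv₂ γ).comp ((aux_lmap Sinv hSinv₁ hSinv₂ β).comp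
      ((aux_lmap Sinv hSinv₁ hSinv₂ γ).comp (aux_invmap Sinv hSinv₁ hSinv₂ α)))
  have hψ : AuxHom D S Sinv (α.lmap ∘ₗ β.invmap) :=
    (aux_lmap Sinv hSinv₁ hSinv₂ α).comp (aux_invmap Sinv hSinv₁ hSinv₂ β)
  refine ⟨part1YD hφ actN hNq, part2YD hψ coactN hNc,
    part3YD hφ hψ actN coactN hNyd ?_ ?_⟩
  · intro x; rfl
  · intro x
    simp [HopfQuasigroupAut.lmap, HopfQuasigroupAut.invmap, LinearMap.comp_apply]

end Statement14
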